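/- arXiv:2601.16643 — 8 statements merged into one kernel-verified Lean document; each statement's English description precedes it below -/
import Mathlib

section
/- At the all-defector state (x,y,z,w)=(0,1,0,0), the Jacobian of the reduced three-dimensional replicator system (in variables x,y,z after eliminating w) has eigenvalues {0, ε−c, ε−c}. Consequently, if ε>c this equilibrium is unstable. -/
noncomputable section

/-- Reduced replicator vector field of the reputation-based voluntary Prisoner's
Dilemma: state `p = (x, y, z)` with `w = 1 - x - y - z` eliminated; payoffs
`Π_C = x+z`, `Π_D = bx`, `Π_CE = (x+z)(1-c)+(y+w)(ε-c)`,
`Π_DE = x(b-c)-zc+(y+w)(ε-c)`; dynamics `ẋ = x(Π_C − Π̄)`, etc. -/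
def repField (b c ε : ℝ) (p : Fin 3 → ℝ) : Fin 3 → ℝ :=
  let x := p 0
  let y := p 1
  let z := p 2
  let w := 1 - x - y - z
  let PC := x + z
  let PD := b * x
  let PCE := (x + z) * (1 - c) + (y + w) * (ε - c)
  let PDE := x * (b - c) - z * c + (y + w) * (ε - c)
  let Pbar := x * PC + y * PD + z * PCE + w * PDE
  ![x * (PC - Pbar), y * (PD - Pbar), z * (PCE - Pbar)]

/-- Jacobian matrix of the reduced replicator field at `p`,
entry `(i, j)` being the partial derivative of the `i`-th component
with respect to the `j`-th variable. -/
def jac (b c ε : ℝ) (p : Fin 3 → ℝ) : Matrix (Fin 3) (Fin 3) ℝ :=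
  fun i j => deriv (fun t : ℝ => repField b c ε (Function.update p j t) i) (p j)

/-! The Jacobian at `(0, 1, 0)` is lower triangular with diagonal `(0, ε - c, ε - c)`, which gives
the characteristic polynomial; its last column is `(ε - c) • e₂`, so the direction `e₂` of the
enforcing cooperators is an eigenvector for `ε - c`. -/

open Polynomial in
theorem Matrix.charpoly_of_isLowerTriangular {n R : Type*} [Fintype n] [DecidableEq n]
    [LinearOrder n] [CommRing R] (M : Matrix n n R) (h : M.IsLowerTriangular) :
    M.charpoly = ∏ i : n, (X - C (M i i)) := by
  rw [← Matrix.charpoly_transpose]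
  exact Matrix.charpoly_of_isUpperTriangular _ h.transpose

theorem jac_allD (b c ε : ℝ) :
    jac b c ε ![0, 1, 0] = !![0, 0, 0; ε - c, ε - c, 0; 0, 0, ε - c] := by
  ext i j
  fin_cases i <;> fin_cases j <;>
    simp (disch := fun_prop) [jac, repField, Function.update_apply]

theorem jac_allD_isLowerTriangular (b c ε : ℝ) : (jac b c ε ![0, 1, 0]).IsLowerTriangular := by
  intro i j hij
  rw [OrderDual.toDual_lt_toDual] at hij
  rw [jac_allD]
  fin_cases i <;> fin_cases j <;> simp_all

open Polynomial in
theorem allD_jacobian_eigenvalues_general (b c ε : ℝ) :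
    (jac b c ε ![0, 1, 0]).charpoly = X * (X - C (ε - c)) ^ 2 ∧
    (c < ε → ∃ lam : ℝ, 0 < lam ∧ ∃ v : Fin 3 → ℝ, v ≠ 0 ∧
      (jac b c ε ![0, 1, 0]).mulVec v = lam • v) := by
  constructor
  · rw [Matrix.charpoly_of_isLowerTriangular _ (jac_allD_isLowerTriangular b c ε), jac_allD]
    simp [Fin.prod_univ_three, sq, mul_assoc]
  · intro hce
    refine ⟨ε - c, sub_pos.mpr hce, Pi.single 2 1, by simp, ?_⟩
    rw [jac_allD]
    ext i
    fin_cases i <;> simp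

open Polynomial in
/-- At the all-defector state `(0,1,0,0)`, the Jacobian of the reduced
replicator system has eigenvalues `{0, ε−c, ε−c}` (characteristic polynomial
`X (X − (ε−c))²`); consequently, if `ε > c` this equilibrium is unstable:
there is a positive eigenvalue. -/
theorem allD_jacobian_eigenvalues (b c ε : ℝ) (hb1 : 1 < b) (hb2 : b ≤ 2)
    (hc0 : 0 < c) (hc1 : c < 1) (he0 : 0 < ε) (he1 : ε < 1) :
    (jac b c ε ![0, 1, 0]).charpoly = X * (X - C (ε - c)) ^ 2 ∧
    (c < ε → ∃ lam : ℝ, 0 < lam ∧ ∃ v : Fin 3 → ℝ, v ≠ 0 ∧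
      (jac b c ε ![0, 1, 0]).mulVec v = lam • v) :=
  allD_jacobian_eigenvalues_general b c ε
end
end

section
/- The all-CE state (0,0,1,0) is an equilibrium of the reduced replicator system with Jacobian eigenvalues {−1, c−1, c}; since c>0, it is unstable. -/
noncomputable section

lemma cubic_deriv (a₃ a₂ a₁ a₀ x : ℝ) :
    deriv (fun t : ℝ => a₃*t^3 + a₂*t^2 + a₁*t + a₀) x = 3*a₃*x^2 + 2*a₂*x + a₁ := by
  have h : HasDerivAt (fun t : ℝ => a₃*t^3 + (a₂*t^2 + (a₁*id t + a₀)))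
      (a₃*((3:ℕ)*x^(3-1)) + (a₂*((2:ℕ)*x^(2-1)) + (a₁*1 + 0))) x :=
    ((hasDerivAt_pow 3 x).const_mul a₃).add
      (((hasDerivAt_pow 2 x).const_mul a₂).add
        (((hasDerivAt_id x).const_mul a₁).add (hasDerivAt_const x a₀)))
  have hfun : (fun t : ℝ => a₃*t^3 + (a₂*t^2 + (a₁*id t + a₀)))
      = (fun t : ℝ => a₃*t^3 + a₂*t^2 + a₁*t + a₀) := by
    funext t; simp only [id]; ring
  rw [hfun] at h
  rw [h.deriv]; push_cast; ring

lemma upd0 (t : ℝ) : Function.update ![(0:ℝ), 0, 1] 0 t = ![t, 0, 1] := by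
  funext k; fin_cases k <;> simp

lemma upd1 (t : ℝ) : Function.update ![(0:ℝ), 0, 1] 1 t = ![0, t, 1] := by
  funext k; fin_cases k <;> simp

lemma upd2 (t : ℝ) : Function.update ![(0:ℝ), 0, 1] 2 t = ![0, 0, t] := by
  funext k; fin_cases k <;> simp

lemma jac_eq (b c ε : ℝ) :
    jac b c ε ![0, 0, 1] = !![c, 0, 0; 0, c - 1, 0; -1 - c, -c, -1] := by
  funext i j
  fin_cases i <;> fin_cases j
  · show deriv (fun t : ℝ => repField b c ε (Function.update ![0,0,1] 0 t) 0) (![0,0,1] 0) = c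
    rw [show (fun t : ℝ => repField b c ε (Function.update ![0,0,1] 0 t) 0)
        = fun t : ℝ => (b-1-ε)*t^3 + (ε-c-1)*t^2 + c*t + 0 from by
      funext t; rw [upd0]; show _ * _ = _; simp [repField]; ring]
    rw [show (![(0:ℝ),0,1] 0) = 0 from rfl, cubic_deriv]; norm_num
  · show deriv (fun t : ℝ => repField b c ε (Function.update ![0,0,1] 1 t) 0) (![0,0,1] 1) = 0
    rw [show (fun t : ℝ => repField b c ε (Function.update ![0,0,1] 1 t) 0)
        = fun t : ℝ => (0:ℝ)*t^3 + 0*t^2 + 0*t + 0 from by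
      funext t; rw [upd1]; show _ * _ = _; simp [repField]]
    rw [show (![(0:ℝ),0,1] 1) = 0 from rfl, cubic_deriv]; norm_num
  · show deriv (fun t : ℝ => repField b c ε (Function.update ![0,0,1] 2 t) 0) (![0,0,1] 2) = 0
    rw [show (fun t : ℝ => repField b c ε (Function.update ![0,0,1] 2 t) 0)
        = fun t : ℝ => (0:ℝ)*t^3 + 0*t^2 + 0*t + 0 from by
      funext t; rw [upd2]; show _ * _ = _; simp [repField]]
    rw [show (![(0:ℝ),0,1] 2) = 1 from rfl, cubic_deriv]; norm_num
  · show deriv (fun t : ℝ => repField b c ε (Function.update ![0,0,1] 0 t) 1) (![0,0,1] 0) = 0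
    rw [show (fun t : ℝ => repField b c ε (Function.update ![0,0,1] 0 t) 1)
        = fun t : ℝ => (0:ℝ)*t^3 + 0*t^2 + 0*t + 0 from by
      funext t; rw [upd0]; show _ * _ = _; simp [repField]]
    rw [show (![(0:ℝ),0,1] 0) = 0 from rfl, cubic_deriv]; norm_num
  · show deriv (fun t : ℝ => repField b c ε (Function.update ![0,0,1] 1 t) 1) (![0,0,1] 1) = c - 1
    rw [show (fun t : ℝ => repField b c ε (Function.update ![0,0,1] 1 t) 1)
        = fun t : ℝ => (0:ℝ)*t^3 + (-c)*t^2 + (c-1)*t + 0 from by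
      funext t; rw [upd1]; show _ * _ = _; simp [repField]; ring]
    rw [show (![(0:ℝ),0,1] 1) = 0 from rfl, cubic_deriv]; norm_num
  · show deriv (fun t : ℝ => repField b c ε (Function.update ![0,0,1] 2 t) 1) (![0,0,1] 2) = 0
    rw [show (fun t : ℝ => repField b c ε (Function.update ![0,0,1] 2 t) 1)
        = fun t : ℝ => (0:ℝ)*t^3 + 0*t^2 + 0*t + 0 from by
      funext t; rw [upd2]; show _ * _ = _; simp [repField]]
    rw [show (![(0:ℝ),0,1] 2) = 1 from rfl, cubic_deriv]; norm_num
  · show deriv (fun t : ℝ => repField b c ε (Function.update ![0,0,1] 0 t) 2) (![0,0,1] 0) = -1 - c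
    rw [show (fun t : ℝ => repField b c ε (Function.update ![0,0,1] 0 t) 2)
        = fun t : ℝ => (0:ℝ)*t^3 + (b-1-ε)*t^2 + (-1-c)*t + 0 from by
      funext t; rw [upd0]; show _ * _ = _; simp [repField]; ring]
    rw [show (![(0:ℝ),0,1] 0) = 0 from rfl, cubic_deriv]; norm_num
  · show deriv (fun t : ℝ => repField b c ε (Function.update ![0,0,1] 1 t) 2) (![0,0,1] 1) = -c
    rw [show (fun t : ℝ => repField b c ε (Function.update ![0,0,1] 1 t) 2)
        = fun t : ℝ => (0:ℝ)*t^3 + 0*t^2 + (-c)*t + 0 from by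
      funext t; rw [upd1]; show _ * _ = _; simp [repField]; ring]
    rw [show (![(0:ℝ),0,1] 1) = 0 from rfl, cubic_deriv]; norm_num
  · show deriv (fun t : ℝ => repField b c ε (Function.update ![0,0,1] 2 t) 2) (![0,0,1] 2) = -1
    rw [show (fun t : ℝ => repField b c ε (Function.update ![0,0,1] 2 t) 2)
        = fun t : ℝ => (-1:ℝ)*t^3 + 1*t^2 + 0*t + 0 from by
      funext t; rw [upd2]; show _ * _ = _; simp [repField]; ring]
    rw [show (![(0:ℝ),0,1] 2) = 1 from rfl, cubic_deriv]; norm_num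

open Polynomial in
/-- The all-CE state `(0,0,1,0)` is an equilibrium of the reduced replicator
system with Jacobian eigenvalues `{−1, c−1, c}`; since `c > 0`, it is unstable
(`c` is a positive eigenvalue). -/
theorem allCE_equilibrium_unstable (b c ε : ℝ) (hb1 : 1 < b) (hb2 : b ≤ 2)
    (hc0 : 0 < c) (hc1 : c < 1) (he0 : 0 < ε) (he1 : ε < 1) :
    repField b c ε ![0, 0, 1] = 0 ∧
    (jac b c ε ![0, 0, 1]).charpoly
      = (X - C (-1)) * (X - C (c - 1)) * (X - C c) ∧
    ∃ v : Fin 3 → ℝ, v ≠ 0 ∧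
      (jac b c ε ![0, 0, 1]).mulVec v = c • v := by
  refine ⟨?_, ?_, ![1, 0, -1], ?_, ?_⟩
  · funext i
    fin_cases i <;> · simp [repField]; try ring
  · rw [jac_eq, Matrix.charpoly, Matrix.det_fin_three]
    simp [Matrix.charmatrix, Matrix.scalar, map_sub, map_neg, map_one]
    ring
  · intro h
    have := congrFun h 0
    simp at this
  · rw [jac_eq]
    funext i
    fin_cases i <;>
      · simp [Matrix.mulVec, dotProduct, Fin.sum_univ_three]
        try ring
end
end

section
/- At the all-DE state (0,0,0,1), the Jacobian of the reduced replicator system has eigenvalues {c−ε, c−ε, 0}; in particular, if ε<c this equilibrium is unstable. -/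
noncomputable section

lemma deriv_cubic (A B D E : ℝ) :
    deriv (fun t : ℝ => A * t ^ 3 + B * t ^ 2 + D * t + E) 0 = D := by
  have h0 := ((((hasDerivAt_pow 3 (0:ℝ)).const_mul A).add
      ((hasDerivAt_pow 2 (0:ℝ)).const_mul B)).add
      ((hasDerivAt_id (0:ℝ)).const_mul D)).add_const E
  simpa using h0.deriv

lemma deriv_eq_of_cubic (f : ℝ → ℝ) (A B D E : ℝ)
    (h : ∀ t, f t = A * t ^ 3 + B * t ^ 2 + D * t + E) : deriv f 0 = D := by
  rw [funext h]; exact deriv_cubic A B D E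

lemma jac_allDE (b c ε : ℝ) :
    jac b c ε ![0,0,0] = Matrix.of ![![c-ε,0,0],![0,c-ε,0],![0,0,0]] := by
  ext i j
  fin_cases i <;> fin_cases j <;>
    simp only [jac, Matrix.cons_val_zero, Matrix.cons_val_one, Matrix.head_cons,
      Matrix.cons_val_two, Matrix.tail_cons, Matrix.of_apply]
  · exact deriv_eq_of_cubic _ (b-ε-1) (1-b+2*ε-c) (c-ε) 0 (fun t => by
      simp [repField, Function.update]; ring)
  · exact deriv_eq_of_cubic _ 0 0 0 0 (fun t => by
      simp [repField, Function.update])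
  · exact deriv_eq_of_cubic _ 0 0 0 0 (fun t => by
      simp [repField, Function.update])
  · exact deriv_eq_of_cubic _ 0 0 0 0 (fun t => by
      simp [repField, Function.update])
  · exact deriv_eq_of_cubic _ 0 (ε-c) (c-ε) 0 (fun t => by
      simp [repField, Function.update]; ring)
  · exact deriv_eq_of_cubic _ 0 0 0 0 (fun t => by
      simp [repField, Function.update])
  · exact deriv_eq_of_cubic _ 0 0 0 0 (fun t => by
      simp [repField, Function.update])
  · exact deriv_eq_of_cubic _ 0 0 0 0 (fun t => by
      simp [repField, Function.update])
  · exact deriv_eq_of_cubic _ (-1) 1 0 0 (fun t => by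
      simp [repField, Function.update]; ring)

open Polynomial in
/-- At the all-DE state `(0,0,0,1)` (reduced coordinates `(0,0,0)`), the
Jacobian of the reduced replicator system has eigenvalues `{c−ε, c−ε, 0}`;
in particular, if `ε < c` this equilibrium is unstable: there is a positive
eigenvalue. -/
theorem allDE_jacobian_eigenvalues (b c ε : ℝ) (hb1 : 1 < b) (hb2 : b ≤ 2)
    (hc0 : 0 < c) (hc1 : c < 1) (he0 : 0 < ε) (he1 : ε < 1) :
    (jac b c ε ![0, 0, 0]).charpoly = (X - C (c - ε)) ^ 2 * X ∧
    (ε < c → ∃ lam : ℝ, 0 < lam ∧ ∃ v : Fin 3 → ℝ, v ≠ 0 ∧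
      (jac b c ε ![0, 0, 0]).mulVec v = lam • v) := by
  rw [jac_allDE]
  constructor
  · rw [Matrix.charpoly, Matrix.det_fin_three]
    simp [Matrix.charmatrix_apply, Matrix.one_apply, Matrix.vecHead, Matrix.vecTail]
    ring
  · intro hec
    refine ⟨c - ε, by linarith, ![1,0,0], ?_, ?_⟩
    · intro hv
      have := congrFun hv 0
      simp at this
    · funext i
      fin_cases i <;>
        simp [Matrix.mulVec, dotProduct, Fin.sum_univ_three]
end
end

section
/- The point E₅ = (0, (c−1)/(ε−1), (ε−c)/(ε−1), 0) lies in the simplex (i.e., has nonnegative coordinates summing to 1) if and only if ε ≤ c < 1, and at E₅ the strategies D and CE earn equal payoff: Π_D = Π_CE. -/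
/-! Write `E₅ = (0, y, z, 0)`. Since `ε - 1 < 0`, `y ≥ 0 ↔ c ≤ 1` and `z ≥ 0 ↔ ε ≤ c`, while
`y + z = 1` whenever `ε ≠ 1`. With `x = w = 0` the payoff of CE is
`z (1 - c) + y (ε - c) = (ε - c)/(ε - 1) · ((1 - c) + (c - 1)) = 0`, which is `Π_D = b · 0`. -/

section

variable {K : Type*} [Field K]

theorem sub_div_add_sub_div_eq_one {c ε : K} (hε : ε ≠ 1) :
    (c - 1) / (ε - 1) + (ε - c) / (ε - 1) = 1 := by
  rw [← add_div, div_eq_one_iff_eq (sub_ne_zero.2 hε)]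
  ring

theorem sub_div_mul_one_sub_add_sub_div_mul_eq_zero (c ε : K) :
    (ε - c) / (ε - 1) * (1 - c) + (c - 1) / (ε - 1) * (ε - c) = 0 := by
  ring

variable [LinearOrder K] [IsStrictOrderedRing K]

theorem nonneg_div_iff_of_neg {a d : K} (hd : d < 0) : 0 ≤ a / d ↔ a ≤ 0 := by
  rw [le_div_iff_of_neg hd, zero_mul]

end

theorem E5_simplex_and_indifference_general (b c ε : ℝ) (hc1 : c < 1) (he1 : ε < 1) :
    ((0 ≤ (c - 1) / (ε - 1) ∧ 0 ≤ (ε - c) / (ε - 1) ∧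
        (0 : ℝ) + (c - 1) / (ε - 1) + (ε - c) / (ε - 1) + 0 = 1)
      ↔ (ε ≤ c ∧ c < 1)) ∧
    b * 0 = ((0 : ℝ) + (ε - c) / (ε - 1)) * (1 - c)
        + ((c - 1) / (ε - 1) + 0) * (ε - c) := by
  have hε : ε - 1 < 0 := sub_neg.2 he1
  simp only [zero_add, add_zero, mul_zero, nonneg_div_iff_of_neg hε, sub_nonpos,
    sub_div_add_sub_div_eq_one he1.ne, and_true]
  refine ⟨⟨fun h => ⟨h.2, hc1⟩, fun h => ⟨hc1.le, h.1⟩⟩, ?_⟩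
  exact (sub_div_mul_one_sub_add_sub_div_mul_eq_zero c ε).symm

/-- The point `E₅ = (0, (c−1)/(ε−1), (ε−c)/(ε−1), 0)` lies in the simplex
(nonnegative coordinates summing to 1) if and only if `ε ≤ c < 1`, and at `E₅`
the strategies D and CE earn equal payoff: `Π_D = Π_CE`, where `Π_D = b·x` and
`Π_CE = (x+z)(1−c) + (y+w)(ε−c)` evaluated at `(x,y,z,w) = E₅`. -/
theorem E5_simplex_and_indifference (b c ε : ℝ) (hb1 : 1 < b) (hb2 : b ≤ 2)
    (hc0 : 0 < c) (hc1 : c < 1) (he0 : 0 < ε) (he1 : ε < 1) :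
    ((0 ≤ (c - 1) / (ε - 1) ∧ 0 ≤ (ε - c) / (ε - 1) ∧
        (0 : ℝ) + (c - 1) / (ε - 1) + (ε - c) / (ε - 1) + 0 = 1)
      ↔ (ε ≤ c ∧ c < 1)) ∧
    b * 0 = ((0 : ℝ) + (ε - c) / (ε - 1)) * (1 - c)
        + ((c - 1) / (ε - 1) + 0) * (ε - c) :=
  E5_simplex_and_indifference_general b c ε hc1 he1
end

section
/- At the equilibrium E₅ = (0, (c−1)/(ε−1), (ε−c)/(ε−1), 0), with ε<c<1, the Jacobian of the reduced replicator system has eigenvalues (c−ε)/(ε−1), (ε−c)/(ε−1), and (c−1)(c−ε)/(ε−1); the first two have opposite signs, so E₅ is unstable. -/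
noncomputable section

/-!
On the face `x = 0` the Jacobian is block lower triangular: its first row is `(∂ẋ/∂x, 0, 0)`.
With `z = (ε - c)/(ε - 1)` the equilibrium is `E₅ = (0, 1 - z, z)` and `c = ε + (1 - ε) z`;
there `∂ẋ/∂x = z`, and the `(y, z)`-block has eigenvalues `-z` and `(1 - ε)(1 - z) z`, the latter
with eigenvector `(0, 1, -1)` along the invariant edge `y + z = 1`. As `0 < z < 1`, that
eigenvalue is positive.
-/

open Polynomial

lemma Matrix.charpoly_fin_three_of_row_zero {R : Type*} [CommRing R]
    (M : Matrix (Fin 3) (Fin 3) R) (h01 : M 0 1 = 0) (h02 : M 0 2 = 0) :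
    M.charpoly = (X - C (M 0 0)) *
      (X ^ 2 - C (M 1 1 + M 2 2) * X + C (M 1 1 * M 2 2 - M 1 2 * M 2 1)) := by
  rw [Matrix.charpoly, Matrix.det_fin_three]
  simp only [Matrix.charmatrix_apply_eq, Matrix.charmatrix_apply_ne, ne_eq, Fin.reduceEq,
    not_false_eq_true, h01, h02, map_zero, map_add, map_sub, map_mul, neg_zero, mul_neg, neg_mul,
    neg_neg, zero_mul, sub_zero, add_zero]
  ring

lemma jac_on_face_x_zero (b c ε y z : ℝ) :
    jac b c ε ![0, y, z] =
      !![z * (1 - z) + (1 - y) * (c - ε + ε * z), 0, 0;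
        y * ((b - 2 - ε) * z - ε * y + 2 * ε - c), c - ε + ε * z - z ^ 2 - 2 * y * (c - ε + ε * z),
          y * (ε * (1 - y) - 2 * z);
        z * (1 - b - c + ε * (1 - y - z) - (2 - b) * z), z * (ε * (1 - z) - c),
          2 * z - 3 * z ^ 2 - 2 * ε * y * z - (c - ε) * y] := by
  ext i j
  fin_cases i <;> fin_cases j <;>
    simp (disch := fun_prop) [jac, repField, Function.update_apply, -mul_eq_mul_left_iff] <;> ring

/-- The Jacobian at `E₅ = (0, 1 - z, z)`, with `c = ε + (1 - ε) z` eliminated. -/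
def jacE5 (b ε z : ℝ) : Matrix (Fin 3) (Fin 3) ℝ :=
  !![z, 0, 0;
    (1 - z) * z * (b - 3 + ε), -((1 - z) * z), -((1 - z) * z * (2 - ε));
    z * ((1 - ε - b) * (1 - z) - 2 * z), -z ^ 2, z * (1 - ε - (2 - ε) * z)]

lemma jac_edge_equilibrium (b c ε z : ℝ) (hc : c = ε + (1 - ε) * z) :
    jac b c ε ![0, 1 - z, z] = jacE5 b ε z := by
  subst hc
  rw [jac_on_face_x_zero, jacE5]
  simp only [EmbeddingLike.apply_eq_iff_eq, Matrix.vecCons_inj, and_true]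
  and_intros <;> ring

lemma charpoly_jacE5 (b ε z : ℝ) :
    (jacE5 b ε z).charpoly = (X - C (-z)) * (X - C z) * (X - C ((1 - ε) * (1 - z) * z)) := by
  have htrace : jacE5 b ε z 1 1 + jacE5 b ε z 2 2 = -z + (1 - ε) * (1 - z) * z := by
    change -((1 - z) * z) + z * (1 - ε - (2 - ε) * z) = _
    ring
  have hdet : jacE5 b ε z 1 1 * jacE5 b ε z 2 2 - jacE5 b ε z 1 2 * jacE5 b ε z 2 1
      = -z * ((1 - ε) * (1 - z) * z) := by
    change -((1 - z) * z) * (z * (1 - ε - (2 - ε) * z)) - -((1 - z) * z * (2 - ε)) * -z ^ 2 = _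
    ring
  rw [Matrix.charpoly_fin_three_of_row_zero _ rfl rfl, htrace, hdet]
  change (X - C z) * _ = _
  simp only [map_add, map_mul, map_neg]
  ring

lemma jacE5_mulVec_edge (b ε z : ℝ) :
    (jacE5 b ε z).mulVec ![0, 1, -1] = ((1 - ε) * (1 - z) * z) • ![0, 1, -1] := by
  simp only [jacE5, Matrix.cons_mulVec, Matrix.empty_mulVec, Matrix.vec3_dotProduct',
    Matrix.smul_cons, Matrix.smul_empty, smul_eq_mul, Matrix.vecCons_inj, and_true]
  and_intros <;> ring

open Polynomial in
theorem E5_unstable_general (b c ε : ℝ) (hc1 : c < 1) (he1 : ε < 1) (hec : ε < c) :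
    (jac b c ε ![0, (c - 1) / (ε - 1), (ε - c) / (ε - 1)]).charpoly
      = (X - C ((c - ε) / (ε - 1))) * (X - C ((ε - c) / (ε - 1)))
        * (X - C ((c - 1) * (c - ε) / (ε - 1))) ∧
    ((c - ε) / (ε - 1)) * ((ε - c) / (ε - 1)) < 0 ∧
    ∃ lam : ℝ, 0 < lam ∧ ∃ v : Fin 3 → ℝ, v ≠ 0 ∧
      (jac b c ε ![0, (c - 1) / (ε - 1), (ε - c) / (ε - 1)]).mulVec v
        = lam • v := by
  set z := (ε - c) / (ε - 1) with hz
  have hε : ε - 1 ≠ 0 := by linarith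
  have hz_pos : 0 < z := div_pos_of_neg_of_neg (by linarith) (by linarith)
  have hz_lt_one : z < 1 := (div_lt_one_of_neg (by linarith)).2 (by linarith)
  have hc : c = ε + (1 - ε) * z := by rw [hz]; field_simp; ring
  have hy : (c - 1) / (ε - 1) = 1 - z := by rw [hz]; field_simp; ring
  have hneg : (c - ε) / (ε - 1) = -z := by rw [hz, ← neg_div, neg_sub]
  have hthird : (c - 1) * (c - ε) / (ε - 1) = (1 - ε) * (1 - z) * z := by
    have : (c - 1) * (c - ε) / (ε - 1) = (1 - c) * z := by rw [hz]; ring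
    linear_combination this - z * hc
  rw [hy, jac_edge_equilibrium b c ε z hc, hneg, hthird]
  refine ⟨charpoly_jacE5 b ε z, by nlinarith, _, ?_, ![0, 1, -1], ?_, jacE5_mulVec_edge b ε z⟩
  · exact mul_pos (mul_pos (sub_pos.2 he1) (sub_pos.2 hz_lt_one)) hz_pos
  · intro h
    simpa using congrFun h 1

open Polynomial in
/-- At the equilibrium `E₅ = (0, (c−1)/(ε−1), (ε−c)/(ε−1), 0)` with
`ε < c < 1`, the Jacobian of the reduced replicator system has eigenvalues
`(c−ε)/(ε−1)`, `(ε−c)/(ε−1)` and `(c−1)(c−ε)/(ε−1)`; the first two have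
opposite signs, so `E₅` is unstable (it has a positive eigenvalue). -/
theorem E5_unstable (b c ε : ℝ) (hb1 : 1 < b) (hb2 : b ≤ 2)
    (hc0 : 0 < c) (hc1 : c < 1) (he0 : 0 < ε) (he1 : ε < 1) (hec : ε < c) :
    (jac b c ε ![0, (c - 1) / (ε - 1), (ε - c) / (ε - 1)]).charpoly
      = (X - C ((c - ε) / (ε - 1))) * (X - C ((ε - c) / (ε - 1)))
        * (X - C ((c - 1) * (c - ε) / (ε - 1))) ∧
    ((c - ε) / (ε - 1)) * ((ε - c) / (ε - 1)) < 0 ∧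
    ∃ lam : ℝ, 0 < lam ∧ ∃ v : Fin 3 → ℝ, v ≠ 0 ∧
      (jac b c ε ![0, (c - 1) / (ε - 1), (ε - c) / (ε - 1)]).mulVec v
        = lam • v :=
  E5_unstable_general b c ε hc1 he1 hec
end
end

section
/- At E₆ = ((ε−c)/(1−b+ε), 0, 0, (1−b+c)/(1−b+ε)), the Jacobian eigenvalues of the reduced replicator system are (b−1)(c−ε)/(b−ε−1), (b−1)(ε−c)/(b−ε−1), and (1+c−b)(c−ε)/(b−ε−1); the first two are nonzero of opposite signs whenever c≠ε, so E₆ is unstable whenever it exists with c≠ε. -/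
noncomputable section

/-!
On the edge `y = z = 0` the `y`- and `z`-components `y (Π_D - Π̄)`, `z (Π_CE - Π̄)` carry the
factors `y` and `z`, so the Jacobian there is upper triangular with diagonal
`(∂ₓẋ, Π_D - Π̄, Π_CE - Π̄)`. At `E₆` the payoffs `Π_C` and `Π_DE` agree, so
`Π̄ = Π_C = x*` with `x* = (ε - c)/(1 - b + ε)`; the last two diagonal entries become
`(b - 1) x*` and `(1 - b) x*`, and one of them is positive as soon as `c ≠ ε`.
-/

theorem Matrix.exists_mulVec_eq_smul_of_isRoot_charpoly {K n : Type*} [Field K] [Fintype n]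
    [DecidableEq n] {A : Matrix n n K} {μ : K} (hμ : A.charpoly.IsRoot μ) :
    ∃ v : n → K, v ≠ 0 ∧ A.mulVec v = μ • v := by
  rw [← Matrix.charpoly_toLin', ← Module.End.hasEigenvalue_iff_isRoot_charpoly] at hμ
  obtain ⟨v, hv⟩ := hμ.exists_hasEigenvector
  exact ⟨v, hv.2, by simpa using hv.apply_eq_smul⟩

theorem jac_isUpperTriangular_of_edge (b c ε x : ℝ) :
    (jac b c ε ![x, 0, 0]).IsUpperTriangular := by
  intro i j hji
  fin_cases i <;> fin_cases j <;> simp_all [jac, repField, Function.update]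

/-- On the edge, `Π̄ = x² + (1 - x) Π_DE`; the first entry is `d/dx [x (1 - x) (Π_C - Π_DE)]`. -/
theorem jac_diag_of_edge (b c ε x : ℝ) :
    (jac b c ε ![x, 0, 0]).diag =
      let Pbar := x ^ 2 + (1 - x) * (x * (b - c) + (1 - x) * (ε - c))
      ![(1 - 2 * x) * (x * (1 - b + ε) - (ε - c)) + x * (1 - x) * (1 - b + ε),
        b * x - Pbar,
        x * (1 - c) + (1 - x) * (ε - c) - Pbar] := by
  ext i
  fin_cases i <;>
  · simp (disch := fun_prop) only [Matrix.diag, jac, repField, Function.update, Fin.isValue,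
      ↓reduceDIte, Fin.reduceEq, Fin.zero_eta, Fin.mk_one, Fin.reduceFinMk, Matrix.cons_val_zero,
      Matrix.cons_val_one, Matrix.cons_val, deriv_fun_mul, deriv_fun_add, deriv_fun_sub,
      deriv_id'', deriv_const', deriv_const_sub_id']
    ring

theorem jac_diag_E6 (b c ε : ℝ) (hden : b - ε - 1 ≠ 0) :
    (jac b c ε ![(ε - c) / (1 - b + ε), 0, 0]).diag =
      ![(1 + c - b) * (c - ε) / (b - ε - 1),
        (b - 1) * (c - ε) / (b - ε - 1),
        (b - 1) * (ε - c) / (b - ε - 1)] := by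
  have hden' : 1 - b + ε ≠ 0 := fun h => hden (by linarith)
  rw [jac_diag_of_edge]
  ext i
  fin_cases i <;>
  · simp only [Fin.zero_eta, Fin.mk_one, Fin.reduceFinMk, Matrix.cons_val]
    field_simp
    ring

open Polynomial in
theorem charpoly_jac_E6 (b c ε : ℝ) (hden : b - ε - 1 ≠ 0) :
    (jac b c ε ![(ε - c) / (1 - b + ε), 0, 0]).charpoly
      = (X - C ((b - 1) * (c - ε) / (b - ε - 1)))
        * (X - C ((b - 1) * (ε - c) / (b - ε - 1)))
        * (X - C ((1 + c - b) * (c - ε) / (b - ε - 1))) := by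
  set M := jac b c ε ![(ε - c) / (1 - b + ε), 0, 0]
  rw [M.charpoly_of_isUpperTriangular (jac_isUpperTriangular_of_edge ..), Fin.prod_univ_three]
  have hdiag := jac_diag_E6 b c ε hden
  rw [← M.diag_apply, ← M.diag_apply, ← M.diag_apply, hdiag]
  simp only [Fin.isValue, Matrix.cons_val_zero, Matrix.cons_val_one, Matrix.cons_val_two,
    Matrix.head_cons, Matrix.tail_cons]
  ring

open Polynomial in
theorem E6_unstable_general (b c ε : ℝ) (hb1 : 1 < b)
    (hden : b - ε - 1 ≠ 0) :
    (jac b c ε ![(ε - c) / (1 - b + ε), 0, 0]).charpoly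
      = (X - C ((b - 1) * (c - ε) / (b - ε - 1)))
        * (X - C ((b - 1) * (ε - c) / (b - ε - 1)))
        * (X - C ((1 + c - b) * (c - ε) / (b - ε - 1))) ∧
    (c ≠ ε →
      ((b - 1) * (c - ε) / (b - ε - 1)) * ((b - 1) * (ε - c) / (b - ε - 1)) < 0 ∧
      ∃ lam : ℝ, 0 < lam ∧ ∃ v : Fin 3 → ℝ, v ≠ 0 ∧
        (jac b c ε ![(ε - c) / (1 - b + ε), 0, 0]).mulVec v = lam • v) := by
  have hchar := charpoly_jac_E6 b c ε hden
  refine ⟨hchar, fun hce => ?_⟩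
  set l := (b - 1) * (c - ε) / (b - ε - 1)
  have hneg : (b - 1) * (ε - c) / (b - ε - 1) = -l := by ring
  have hl : l ≠ 0 := div_ne_zero (mul_ne_zero (by linarith) (sub_ne_zero.2 hce)) hden
  refine ⟨by rw [hneg, mul_neg]; exact neg_neg_of_pos (mul_self_pos.2 hl), ?_⟩
  obtain ⟨lam, hpos, hroot⟩ : ∃ lam, 0 < lam ∧
      (jac b c ε ![(ε - c) / (1 - b + ε), 0, 0]).charpoly.IsRoot lam := by
    rcases hl.lt_or_gt with h | h
    · exact ⟨-l, neg_pos.2 h, by simp [hchar, hneg]⟩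
    · exact ⟨l, h, by simp [hchar]⟩
  exact ⟨lam, hpos, Matrix.exists_mulVec_eq_smul_of_isRoot_charpoly hroot⟩

open Polynomial in
/-- At `E₆ = ((ε−c)/(1−b+ε), 0, 0, (1−b+c)/(1−b+ε))`, the Jacobian
eigenvalues of the reduced replicator system are `(b−1)(c−ε)/(b−ε−1)`,
`(b−1)(ε−c)/(b−ε−1)` and `(1+c−b)(c−ε)/(b−ε−1)`; whenever `c ≠ ε` the first
two are nonzero of opposite signs, so `E₆` is unstable (it has a positive
eigenvalue). -/
theorem E6_unstable (b c ε : ℝ) (hb1 : 1 < b) (hb2 : b ≤ 2)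
    (hc0 : 0 < c) (hc1 : c < 1) (he0 : 0 < ε) (he1 : ε < 1)
    (hden : b - ε - 1 ≠ 0) :
    (jac b c ε ![(ε - c) / (1 - b + ε), 0, 0]).charpoly
      = (X - C ((b - 1) * (c - ε) / (b - ε - 1)))
        * (X - C ((b - 1) * (ε - c) / (b - ε - 1)))
        * (X - C ((1 + c - b) * (c - ε) / (b - ε - 1))) ∧
    (c ≠ ε →
      ((b - 1) * (c - ε) / (b - ε - 1)) * ((b - 1) * (ε - c) / (b - ε - 1)) < 0 ∧
      ∃ lam : ℝ, 0 < lam ∧ ∃ v : Fin 3 → ℝ, v ≠ 0 ∧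
        (jac b c ε ![(ε - c) / (1 - b + ε), 0, 0]).mulVec v = lam • v) :=
  E6_unstable_general b c ε hb1 hden
end
end

section
/- For every y* ∈ [0, c/ε], the point E₇(y*) = ((ε−c)/(bε), y*, (ε−c)(b−1)/(bε), c/ε − y*) has all four payoffs equal (Π_C = Π_D = Π_CE = Π_DE) and is therefore an equilibrium of the replicator dynamics; moreover its coordinates are nonnegative and sum to 1 precisely when c ≤ ε. -/
/-- For every `y* ∈ [0, c/ε]`, the point
`E₇(y*) = ((ε−c)/(bε), y*, (ε−c)(b−1)/(bε), c/ε − y*)` has all four payoffs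
equal (`Π_C = Π_D = Π_CE = Π_DE`) and is therefore an equilibrium of the
four-strategy replicator dynamics; moreover its coordinates are nonnegative
and sum to 1 precisely when `c ≤ ε`. -/
theorem E7_family_equilibrium (b c ε ystar : ℝ) (hb1 : 1 < b) (hb2 : b ≤ 2)
    (hc0 : 0 < c) (hc1 : c < 1) (he0 : 0 < ε) (he1 : ε < 1)
    (hy0 : 0 ≤ ystar) (hy1 : ystar ≤ c / ε) :
    let x := (ε - c) / (b * ε)
    let y := ystar
    let z := (ε - c) * (b - 1) / (b * ε)
    let w := c / ε - ystar
    let PC := x + z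
    let PD := b * x
    let PCE := (x + z) * (1 - c) + (y + w) * (ε - c)
    let PDE := x * (b - c) - z * c + (y + w) * (ε - c)
    let Pbar := x * PC + y * PD + z * PCE + w * PDE
    (PC = PD ∧ PD = PCE ∧ PCE = PDE) ∧
    (x * (PC - Pbar) = 0 ∧ y * (PD - Pbar) = 0 ∧
      z * (PCE - Pbar) = 0 ∧ w * (PDE - Pbar) = 0) ∧
    ((0 ≤ x ∧ 0 ≤ y ∧ 0 ≤ z ∧ 0 ≤ w ∧ x + y + z + w = 1) ↔ c ≤ ε) := by
  intro x y z w PC PD PCE PDE Pbar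
  have hb0 : (0:ℝ) < b := lt_trans one_pos hb1
  have hbe : b * ε ≠ 0 := ne_of_gt (mul_pos hb0 he0)
  have he : ε ≠ 0 := ne_of_gt he0
  have hsum : x + y + z + w = 1 := by
    unfold x y z w
    field_simp
    ring
  have h1 : PC = PD := by
    unfold PC PD x z
    field_simp
    ring
  have h2 : PD = PCE := by
    unfold PD PCE x y z w
    field_simp
    ring
  have h3 : PCE = PDE := by
    unfold PCE PDE x y z w
    field_simp
    ring_nf
  have hPbar : Pbar = PC := by
    unfold Pbar
    rw [← h3, ← h2, ← h1]
    linear_combination PC * hsum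
  refine ⟨⟨h1, h2, h3⟩, ?_, ?_⟩
  · refine ⟨?_, ?_, ?_, ?_⟩ <;>
      simp [hPbar, h1, h2, h3, ← h1, sub_self]
  · constructor
    · rintro ⟨hx, -, -, hw, -⟩
      by_contra hce
      push_neg at hce
      have : x < 0 := by
        unfold x
        apply div_neg_of_neg_of_pos
        · linarith
        · exact mul_pos hb0 he0
      linarith
    · intro hce
      refine ⟨?_, hy0, ?_, ?_, hsum⟩
      · unfold x
        apply div_nonneg
        · linarith
        · positivity
      · unfold z
        apply div_nonneg
        · apply mul_nonneg <;> linarith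
        · positivity
      · unfold w
        linarith
end

section
/- With A(y*) = c − bεy* and Ω = 4bc(b−1), the eigenvalues λ₂,₃(y*) = ((ε−c)/(2bε))·[A(y*) ± √(A(y*)²−Ω)] both have negative real part if and only if A(y*) < 0, i.e., if and only if y* > c/(bε); they both have positive real part iff y* < c/(bε); and they are purely imaginary (nonzero) iff y* = c/(bε). Hence the equilibrium E₇(y*) is linearly stable in the transverse directions iff y* > c/(bε). -/
set_option maxHeartbeats 800000

open Complex in
lemma sqrtC_of_nonneg {x : ℝ} (hx : 0 ≤ x) :
    ((x : ℂ)) ^ ((1:ℂ)/2) = (Real.sqrt x : ℂ) := by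
  rw [Real.sqrt_eq_rpow, ofReal_cpow hx]
  norm_num

open Complex in
lemma sqrtC_of_neg {x : ℝ} (hx : x < 0) :
    ((x : ℂ)) ^ ((1:ℂ)/2) = Complex.I * (Real.sqrt (-x) : ℂ) := by
  rw [ofReal_cpow_of_nonpos hx.le, ← ofReal_neg,
    show ((1:ℂ)/2) = (((1/2 : ℝ)) : ℂ) by norm_num,
    ← ofReal_cpow (by linarith : (0:ℝ) ≤ -x) (1/2), ← Real.sqrt_eq_rpow]
  have : (↑Real.pi * I * ((↑(1/2:ℝ)) : ℂ)) = (↑(Real.pi/2) : ℂ) * I := by push_cast; ring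
  rw [this, Complex.exp_mul_I]
  push_cast
  simp [Real.cos_pi_div_two, Real.sin_pi_div_two]
  ring

lemma neg_of_mul_neg_left' {K A : ℝ} (h : K * A < 0) (hK : 0 < K) : A < 0 := by
  by_contra h'; push_neg at h'; nlinarith [mul_nonneg hK.le h']

lemma pos_of_mul_pos_left' {K A : ℝ} (h : 0 < K * A) (hK : 0 < K) : 0 < A := by
  by_contra h'; push_neg at h'; nlinarith [mul_nonpos_of_nonneg_of_nonpos hK.le h']

/-- Stability of the interior equilibrium family `E₇(y*)`. With
`A = c − bεy*` and `Ω = 4bc(b−1)`, the two nonzero Jacobian eigenvalues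
`λ₂,₃ = ((ε−c)/(2bε))·(A ± √(A²−Ω))` (complex square root) both have negative
real part iff `A < 0`, i.e. iff `y* > c/(bε)`; both have positive real part
iff `y* < c/(bε)`; and they are purely imaginary (nonzero) iff `y* = c/(bε)`.
Hence `E₇(y*)` is linearly stable in the transverse directions iff
`y* > c/(bε)`. -/
theorem E7_transverse_stability (b c ε ystar : ℝ) (hb1 : 1 < b) (hb2 : b ≤ 2)
    (hc0 : 0 < c) (hce : c < ε) (he1 : ε < 1)
    (hy0 : 0 ≤ ystar) (hy1 : ystar ≤ c / ε) :
    let A : ℝ := c - b * ε * ystar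
    let Ω : ℝ := 4 * b * c * (b - 1)
    let S : ℂ := ((A ^ 2 - Ω : ℝ) : ℂ) ^ ((1 : ℂ) / 2)
    let K : ℝ := (ε - c) / (2 * b * ε)
    let lam2 : ℂ := (K : ℂ) * ((A : ℂ) + S)
    let lam3 : ℂ := (K : ℂ) * ((A : ℂ) - S)
    ((lam2.re < 0 ∧ lam3.re < 0) ↔ A < 0) ∧
    (A < 0 ↔ c / (b * ε) < ystar) ∧
    ((0 < lam2.re ∧ 0 < lam3.re) ↔ ystar < c / (b * ε)) ∧
    ((lam2.re = 0 ∧ lam2.im ≠ 0 ∧ lam3.re = 0 ∧ lam3.im ≠ 0)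
      ↔ ystar = c / (b * ε)) ∧
    ((lam2.re < 0 ∧ lam3.re < 0) ↔ c / (b * ε) < ystar) := by
  intro A Ω S K lam2 lam3
  have hAdef : A = c - b * ε * ystar := rfl
  have hΩdef : Ω = 4 * b * c * (b - 1) := rfl
  have hSdef : S = ((A ^ 2 - Ω : ℝ) : ℂ) ^ ((1 : ℂ) / 2) := rfl
  have hKdef : K = (ε - c) / (2 * b * ε) := rfl
  have hlam2 : lam2 = (K : ℂ) * ((A : ℂ) + S) := rfl
  have hlam3 : lam3 = (K : ℂ) * ((A : ℂ) - S) := rfl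
  clear_value lam3 lam2 K S Ω A
  have hε : 0 < ε := hc0.trans hce
  have hb0 : 0 < b := by linarith
  have hbε : 0 < b * ε := by positivity
  have hΩ : 0 < Ω := by
    rw [hΩdef]; nlinarith [mul_pos (mul_pos hb0 hc0) (show (0:ℝ) < b - 1 by linarith)]
  have hK : 0 < K := by
    rw [hKdef]; apply div_pos <;> [linarith; positivity]
  have heq1 : A < 0 ↔ c / (b * ε) < ystar := by
    rw [hAdef, div_lt_iff₀ hbε]; constructor <;> intro h <;> nlinarith
  have heq2 : 0 < A ↔ ystar < c / (b * ε) := by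
    rw [hAdef, lt_div_iff₀ hbε]; constructor <;> intro h <;> nlinarith
  have heq3 : A = 0 ↔ ystar = c / (b * ε) := by
    rw [hAdef, eq_div_iff hbε.ne']; constructor <;> intro h <;> nlinarith
  rcases le_or_gt 0 (A ^ 2 - Ω) with hd0 | hd0
  · -- real square root case
    set s : ℝ := Real.sqrt (A ^ 2 - Ω) with hs
    have hS : S = (s : ℂ) := by rw [hSdef]; exact sqrtC_of_nonneg hd0
    have hs0 : 0 ≤ s := Real.sqrt_nonneg _
    have hslt : s < |A| := by
      rw [hs, show |A| = Real.sqrt (A^2) by rw [Real.sqrt_sq_eq_abs]]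
      exact Real.sqrt_lt_sqrt hd0 (by linarith)
    have hre2 : lam2.re = K * (A + s) := by rw [hlam2, hS]; push_cast; simp [Complex.mul_re]
    have hre3 : lam3.re = K * (A - s) := by rw [hlam3, hS]; push_cast; simp [Complex.mul_re]
    have him2 : lam2.im = 0 := by rw [hlam2, hS]; push_cast; simp
    have key : (lam2.re < 0 ∧ lam3.re < 0) ↔ A < 0 := by
      rw [hre2, hre3]; constructor
      · rintro ⟨h1, h2⟩
        have : K * (2 * A) < 0 := by nlinarith
        have := neg_of_mul_neg_left' this hK; linarith
      · intro hA
        have habs : |A| = -A := abs_of_neg hA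
        rw [habs] at hslt
        exact ⟨mul_neg_of_pos_of_neg hK (by linarith),
          mul_neg_of_pos_of_neg hK (by linarith)⟩
    refine ⟨key, heq1, ?_, ?_, key.trans heq1⟩
    · rw [hre2, hre3, ← heq2]; constructor
      · rintro ⟨h1, h2⟩
        have : 0 < K * (2 * A) := by nlinarith
        have := pos_of_mul_pos_left' this hK; linarith
      · intro hA
        have habs : |A| = A := abs_of_pos hA
        rw [habs] at hslt
        exact ⟨mul_pos hK (by linarith), mul_pos hK (by linarith)⟩
    · constructor
      · rintro ⟨h1, h2, -⟩; exact absurd him2 h2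
      · intro h
        have hA0 : A = 0 := heq3.mpr h
        exfalso; rw [hA0] at hd0; nlinarith
  · -- complex conjugate pair case
    set s : ℝ := Real.sqrt (-(A ^ 2 - Ω)) with hs
    have hS : S = Complex.I * (s : ℂ) := by rw [hSdef]; exact sqrtC_of_neg hd0
    have hs0 : 0 < s := Real.sqrt_pos.mpr (by linarith)
    have hre2 : lam2.re = K * A := by rw [hlam2, hS]; simp [Complex.mul_re]
    have hre3 : lam3.re = K * A := by rw [hlam3, hS]; simp [Complex.mul_re]
    have him2 : lam2.im = K * s := by rw [hlam2, hS]; simp [Complex.mul_im]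
    have him3 : lam3.im = -(K * s) := by rw [hlam3, hS]; simp [Complex.mul_im]
    have key : (lam2.re < 0 ∧ lam3.re < 0) ↔ A < 0 := by
      rw [hre2, hre3]
      constructor
      · rintro ⟨h1, -⟩; exact neg_of_mul_neg_left' h1 hK
      · intro hA
        have : K * A < 0 := mul_neg_of_pos_of_neg hK hA
        exact ⟨this, this⟩
    refine ⟨key, heq1, ?_, ?_, key.trans heq1⟩
    · rw [hre2, hre3, ← heq2]; constructor
      · rintro ⟨h1, -⟩; exact pos_of_mul_pos_left' h1 hK
      · intro hA
        have : 0 < K * A := mul_pos hK hA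
        exact ⟨this, this⟩
    · rw [hre2, hre3, him2, him3, ← heq3]
      constructor
      · rintro ⟨h1, -⟩
        rcases mul_eq_zero.mp h1 with h | h
        · exact absurd h hK.ne'
        · exact h
      · intro hA
        refine ⟨by rw [hA]; ring, by positivity, by rw [hA]; ring, ?_⟩
        simp only [neg_ne_zero]; positivity
end
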